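/- Let (R, M) be a local Artinian ring which is not a field, with index of nilpotency n of M (M^n = 0, M^{n-1} ≠ 0), and let R ⊂ S be a finite subintegral extension with (R:S) = 0. Set M_i := M + S·M^i for 0 ≤ i ≤ n. Then M_i ≠ M_{i+1} for all 1 ≤ i ≤ n−1; in particular the length of the R-module SM/M is at least n − 1. -/

import Mathlib

/-!
If `M + SMⁱ = M + SMⁱ⁺¹ = M + M·SMⁱ`, then `SMⁱ ⊆ M + M·SMⁱ`, and since `M` is nilpotent,
iterating this inclusion gives `SMⁱ ⊆ M ⊆ R` (Nakayama without finiteness). Thus `Mⁱ` lies in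
the conductor `(R : S) = 0`, contradicting `Mⁱ ⊇ Mⁿ⁻¹ ≠ 0` for `i ≤ n - 1`. The chain
`M_n ≤ ⋯ ≤ M_1` is therefore strictly increasing.
-/

namespace Submodule

variable {R M : Type*} [CommRing R] [AddCommGroup M] [Module R M]

theorem le_sup_pow_smul_of_le_sup_smul {I : Ideal R} {A N : Submodule R M}
    (h : N ≤ A ⊔ I • N) (k : ℕ) : N ≤ A ⊔ (I ^ k) • N := by
  induction k with
  | zero => simp
  | succ k ih =>
    refine ih.trans (sup_le le_sup_left ?_)
    calc (I ^ k) • N ≤ (I ^ k) • (A ⊔ I • N) := smul_mono le_rfl h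
      _ = (I ^ k) • A ⊔ (I ^ (k + 1)) • N := by rw [smul_sup, pow_succ, Submodule.mul_smul]
      _ ≤ A ⊔ (I ^ (k + 1)) • N := sup_le_sup_right smul_le_right _

theorem le_of_le_sup_smul_of_pow_eq_bot {I : Ideal R} {n : ℕ} (hI : I ^ n = ⊥)
    {A N : Submodule R M} (h : N ≤ A ⊔ I • N) : N ≤ A := by
  simpa [hI] using le_sup_pow_smul_of_le_sup_smul h n

end Submodule

/-- `hcond` says that the conductor `(R : S)` is zero, and `J` lies in it. -/
theorem Subring.eq_bot_of_smul_top_le_range {S : Type*} [CommRing S] {R : Subring S}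
    (hcond : ∀ t : S, (∀ u : S, t * u ∈ R) → t = 0) {J : Ideal R}
    (hJ : J • (⊤ : Submodule R S) ≤ LinearMap.range (Algebra.linearMap R S)) : J = ⊥ := by
  refine (Submodule.eq_bot_iff _).2 fun x hx => Subtype.ext (hcond x fun u => ?_)
  obtain ⟨r, hr⟩ := hJ (Submodule.smul_mem_smul hx Submodule.mem_top)
  rw [← show (r : S) = x * u from hr]
  exact r.2

theorem LTSeries.exists_of_lt_succ {α : Type*} [Preorder α] (f : ℕ → α) (m : ℕ)
    (hf : ∀ i < m, f (i + 1) < f i) :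
    ∃ c : LTSeries α, c.length = m ∧ c.head = f m ∧ c.last = f 0 := by
  refine ⟨LTSeries.mk m (fun j => f (m - j)) (Fin.strictMono_iff_lt_succ.2 fun j => ?_),
    rfl, rfl, congrArg f (by simp)⟩
  have := hf (m - (j + 1)) (by omega)
  simpa [show m - (j + 1) + 1 = m - j by omega] using this

theorem stmt14 (S : Type*) [CommRing S] (R : Subring S)
    [IsLocalRing ↥R]
    (hcond : ∀ t : S, (∀ u : S, t * u ∈ R) → t = 0)
    (n : ℕ)
    (hn0 : (IsLocalRing.maximalIdeal ↥R) ^ n = ⊥)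
    (hn1 : (IsLocalRing.maximalIdeal ↥R) ^ (n - 1) ≠ ⊥)
    (Mi : ℕ → Submodule ↥R S)
    (hMi : ∀ i, Mi i =
      Submodule.map (Algebra.linearMap ↥R S)
          (IsLocalRing.maximalIdeal ↥R : Submodule ↥R ↥R) ⊔
        Submodule.restrictScalars ↥R
          (Ideal.map (algebraMap ↥R S) ((IsLocalRing.maximalIdeal ↥R) ^ i))) :
    (∀ i, 1 ≤ i → i ≤ n - 1 → Mi i ≠ Mi (i + 1)) ∧
      ∃ c : RelSeries {(x, y) : Submodule ↥R S × Submodule ↥R S | x < y},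
        c.length = n - 1 ∧ c.head = Mi n ∧ c.last = Mi 1 := by
  set I := IsLocalRing.maximalIdeal ↥R
  set A := Submodule.map (Algebra.linearMap ↥R S) (I : Submodule ↥R ↥R)
  have hMi' (i : ℕ) : Mi i = A ⊔ (I ^ i) • ⊤ := by rw [hMi, Ideal.smul_top_eq_map]
  have hne (i : ℕ) (hi : i ≤ n - 1) : Mi i ≠ Mi (i + 1) := by
    intro h
    have hle : (I ^ i) • (⊤ : Submodule ↥R S) ≤ A ⊔ I • (I ^ i) • ⊤ := by
      rw [← Submodule.mul_smul, ← pow_succ', ← hMi', ← h, hMi']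
      exact le_sup_right
    have hIi : I ^ i = ⊥ := Subring.eq_bot_of_smul_top_le_range hcond
      ((Submodule.le_of_le_sup_smul_of_pow_eq_bot hn0 hle).trans LinearMap.map_le_range)
    exact hn1 (eq_bot_mono (Ideal.pow_le_pow_right hi) hIi)
  have hanti (i : ℕ) : Mi (i + 1) ≤ Mi i := by
    rw [hMi', hMi']
    exact sup_le_sup_left (Submodule.smul_mono_left (Ideal.pow_le_pow_right i.le_succ)) _
  have hn : 1 ≤ n := Nat.one_le_iff_ne_zero.2 fun h0 => hn1 (by subst h0; exact hn0)
  refine ⟨fun i _ hi => hne i hi, ?_⟩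
  obtain ⟨c, hlen, hhead, hlast⟩ := LTSeries.exists_of_lt_succ (fun i => Mi (i + 1)) (n - 1)
    fun i hi => (hanti _).lt_of_ne (hne _ (by omega)).symm
  exact ⟨c, hlen, by rw [hhead, Nat.sub_add_cancel hn], hlast⟩
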